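/- arXiv:2007.08523 — 10 statements merged into one kernel-verified Lean document; each statement's English description precedes it below -/
import Mathlib

section
/- The stability threshold $\hat\mu(h) = \tfrac{1}{2}\left(T(h) + \sqrt{T(h)^2 - 4h(1-x^a)(1-x^v)}\right)$ is nondecreasing in $h$ on $[0,1]$, where $T(h) = (h+(1-h)q)(1-x^a) + (h+(1-h)(1-q))(1-x^v)$, with $0 \le x^a \le x^v \le 1$ and $q \in [0,1]$. Consequently a disease that is non-endemic ($\mu > \hat\mu(h)$) can become endemic when homophily $h$ increases. -/
set_option maxHeartbeats 1000000 in
/-- Auxiliary: monotonicity of the larger root `(T + r)/2` of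
`x² - T x + h a b` under the key algebraic facts. -/
theorem stmt_6_aux (a b s h₁ h₂ T₁ T₂ r₁ r₂ : ℝ)
    (hab0 : 0 ≤ a * b) (hs0 : 0 ≤ s) (h12 : h₁ ≤ h₂)
    (hkey : a * b ≤ s * T₁ - h₁ * s ^ 2)
    (hTdiff : T₂ - T₁ = (h₂ - h₁) * s)
    (hr10 : 0 ≤ r₁) (hr1sq : r₁ ^ 2 = T₁ ^ 2 - 4 * h₁ * (a * b))
    (hr20 : 0 ≤ r₂) (hr2sq : r₂ ^ 2 = T₂ ^ 2 - 4 * h₂ * (a * b)) :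
    (T₁ + r₁) / 2 ≤ (T₂ + r₂) / 2 := by
  -- key inequality : 2 a b ≤ s * (T₁ + r₁)
  have hslam : 2 * (a * b) ≤ s * (T₁ + r₁) := by
    by_cases hcase : 2 * (a * b) ≤ s * T₁
    · nlinarith [mul_nonneg hs0 hr10]
    · push_neg at hcase
      have hsq : (2 * (a * b) - s * T₁) ^ 2 ≤ (s * r₁) ^ 2 := by
        have expand : (s * r₁) ^ 2 = s ^ 2 * (T₁ ^ 2 - 4 * h₁ * (a * b)) := by
          rw [mul_pow, hr1sq]
        nlinarith [mul_nonneg hab0 (sub_nonneg.mpr hkey)]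
      nlinarith [mul_nonneg hs0 hr10]
  -- L := T₁ + r₁ satisfies the quadratic at h₁
  have hquad1 : (T₁ + r₁) ^ 2 - 2 * T₁ * (T₁ + r₁) + 4 * h₁ * (a * b) = 0 := by
    nlinarith [hr1sq]
  -- hence it is below the larger root at h₂
  have hquad2 : (T₁ + r₁) ^ 2 - 2 * T₂ * (T₁ + r₁) + 4 * h₂ * (a * b) ≤ 0 := by
    have e : (T₁ + r₁) ^ 2 - 2 * T₂ * (T₁ + r₁) + 4 * h₂ * (a * b)
        = ((T₁ + r₁) ^ 2 - 2 * T₁ * (T₁ + r₁) + 4 * h₁ * (a * b))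
          + 2 * (h₂ - h₁) * (2 * (a * b) - s * (T₁ + r₁)) := by
      have e2 : T₂ = T₁ + (h₂ - h₁) * s := by linarith
      rw [e2]; ring
    rw [e, hquad1]
    nlinarith [mul_nonneg (sub_nonneg.mpr h12) (sub_nonneg.mpr hslam)]
  by_cases hc : T₁ + r₁ ≤ T₂
  · linarith
  · push_neg at hc
    have h1 : (T₁ + r₁ - T₂) ^ 2 ≤ r₂ ^ 2 := by nlinarith [hr2sq]
    nlinarith

set_option maxHeartbeats 1000000 in
/-- The stability threshold
`μ̂(h) = (T(h) + √(T(h)² - 4h(1-xa)(1-xv)))/2` with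
`T(h) = (h+(1-h)q)(1-xa) + (h+(1-h)(1-q))(1-xv)` is nondecreasing in `h` on
`[0,1]`.  Consequently, a disease that is non-endemic at homophily `h₁`
(`μ > μ̂(h₁)`) can become endemic at higher homophily `h₂ ≥ h₁` exactly when
`μ < μ̂(h₂)`. -/
theorem stmt_6 (q xa xv : ℝ)
    (hq : q ∈ Set.Icc (0:ℝ) 1)
    (hxa : 0 ≤ xa) (hxav : xa ≤ xv) (hxv : xv ≤ 1)
    (μhat : ℝ → ℝ)
    (hμhat : ∀ h : ℝ, μhat h =
      (((h + (1-h)*q)*(1-xa) + (h + (1-h)*(1-q))*(1-xv))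
        + Real.sqrt (((h + (1-h)*q)*(1-xa) + (h + (1-h)*(1-q))*(1-xv))^2
            - 4*h*(1-xa)*(1-xv))) / 2) :
    MonotoneOn μhat (Set.Icc (0:ℝ) 1) := by
  obtain ⟨hq0, hq1⟩ := hq
  have hq1' : (0:ℝ) ≤ 1 - q := by linarith
  have ha0 : (0:ℝ) ≤ 1 - xa := by linarith
  have hb0 : (0:ℝ) ≤ 1 - xv := by linarith
  have hab0 : (0:ℝ) ≤ (1 - xa) * (1 - xv) := mul_nonneg ha0 hb0
  have hqq : (0:ℝ) ≤ q * (1 - q) := mul_nonneg hq0 hq1'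
  intro h₁ hm₁ h₂ hm₂ h12
  obtain ⟨h10, h11⟩ := hm₁
  obtain ⟨h20, h21⟩ := hm₂
  rw [hμhat h₁, hμhat h₂]
  have hD : ∀ h : ℝ, 0 ≤ ((h + (1-h)*q)*(1-xa) + (h + (1-h)*(1-q))*(1-xv))^2
      - 4*h*(1-xa)*(1-xv) := by
    intro h
    nlinarith [sq_nonneg ((h + (1-h)*q)*(1-xa) - (h + (1-h)*(1-q))*(1-xv)),
      mul_nonneg (mul_nonneg hqq hab0) (sq_nonneg (1-h))]
  refine stmt_6_aux (1-xa) (1-xv) ((1-q)*(1-xa) + q*(1-xv)) h₁ h₂ _ _ _ _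
    hab0 (add_nonneg (mul_nonneg hq1' ha0) (mul_nonneg hq0 hb0)) h12
    ?_ (by ring) (Real.sqrt_nonneg _) ?_ (Real.sqrt_nonneg _) ?_
  · -- key identity : s T₁ - h₁ s² - ab = q(1-q)(xv - xa)² ≥ 0
    nlinarith [mul_nonneg hqq (sq_nonneg (xv - xa))]
  · rw [Real.sq_sqrt (hD h₁)]; ring
  · rw [Real.sq_sqrt (hD h₂)]; ring
end

section
/- Assume $\mu > \hat\mu$ (stability) and $\rho_0^a = \rho_0^v = \rho_0 > 0$. Then the cumulative infections satisfy $CI^a \ge CI^v$ if and only if $x^v \ge x^a$, where $CI^a = \rho_0 \frac{2((\mu - (1-x^v)\tilde{q}^v) + (1-x^a)(1-\tilde{q}^a))}{(T-2\mu-\Delta)(T-2\mu+\Delta)}$ and $CI^v = \rho_0 \frac{2((1-x^v)(1-\tilde{q}^v) + (\mu - (1-x^a)\tilde{q}^a))}{(T-2\mu-\Delta)(T-2\mu+\Delta)}$. -/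
/-- Assume stability (`μ > μ̂`) and symmetric initial conditions
`ρ₀ > 0`.  Then the cumulative infections of the linearized two-group SIS
dynamics satisfy `CIᵃ ≥ CIᵛ ↔ xv ≥ xa`, where
`CIᵃ = ρ₀·2((μ - (1-xv)qv) + (1-xa)(1-qa)) / ((T-2μ-Δ)(T-2μ+Δ))` and
`CIᵛ = ρ₀·2((1-xv)(1-qv) + (μ - (1-xa)qa)) / ((T-2μ-Δ)(T-2μ+Δ))`. -/
theorem stmt_7 (h q xa xv μ ρ0 : ℝ)
    (hh : h ∈ Set.Ico (0:ℝ) 1) (hq : q ∈ Set.Ico (0:ℝ) 1)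
    (hxa : 0 ≤ xa) (hxa1 : xa ≤ 1) (hxv : 0 ≤ xv) (hxv1 : xv ≤ 1)
    (hρ0 : 0 < ρ0)
    (qa qv T Δ μhat CIa CIv : ℝ)
    (hqa : qa = h + (1-h)*q) (hqv : qv = h + (1-h)*(1-q))
    (hT : T = qa*(1-xa) + qv*(1-xv))
    (hΔ : Δ = Real.sqrt (T^2 - 4*h*(1-xa)*(1-xv)))
    (hμhat : μhat = (T + Δ)/2) (hstab : μhat < μ)
    (hCIa : CIa = ρ0 * (2*((μ - (1-xv)*qv) + (1-xa)*(1-qa)))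
      / ((T - 2*μ - Δ) * (T - 2*μ + Δ)))
    (hCIv : CIv = ρ0 * (2*((1-xv)*(1-qv) + (μ - (1-xa)*qa)))
      / ((T - 2*μ - Δ) * (T - 2*μ + Δ))) :
    CIv ≤ CIa ↔ xa ≤ xv := by
  have hΔ0 : 0 ≤ Δ := hΔ ▸ Real.sqrt_nonneg _
  have h1 : Δ < 2*μ - T := by
    have := hstab; rw [hμhat] at this; linarith
  have hD : 0 < (T - 2*μ - Δ) * (T - 2*μ + Δ) :=
    mul_pos_of_neg_of_neg (by linarith) (by linarith)
  have key : CIa - CIv = ρ0*(2*(xv-xa)) / ((T - 2*μ - Δ) * (T - 2*μ + Δ)) := by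
    rw [hCIa, hCIv, div_sub_div_same]; ring_nf
  constructor
  · intro hle
    have : 0 ≤ ρ0*(2*(xv-xa)) / ((T - 2*μ - Δ) * (T - 2*μ + Δ)) := by
      rw [← key]; linarith
    have h2 : 0 ≤ ρ0*(2*(xv-xa)) := by
      by_contra hc
      push_neg at hc
      have := div_neg_of_neg_of_pos hc hD
      linarith
    nlinarith
  · intro hle
    have h2 : 0 ≤ ρ0*(2*(xv-xa)) / ((T - 2*μ - Δ) * (T - 2*μ + Δ)) :=
      div_nonneg (by nlinarith) hD.le
    linarith [key ▸ h2]
end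

section
/- With generic initial conditions $\rho_0^a, \rho_0^v \ge 0$, the cumulative infections of the linearized two-group SIS dynamics satisfy $CI^a \ge CI^v$ if and only if $\rho_0^v(1-x^a) - \rho_0^a(1-x^v) + \mu(\rho_0^a - \rho_0^v) \ge 0$. -/
/-!
The two cumulative-infection formulas share the denominator `(T - 2μ - Δ)(T - 2μ + Δ)`, which
the stability condition `(T + Δ)/2 < μ` makes a product of two negative factors, hence positive.
So `CIᵛ ≤ CIᵃ` is the comparison of numerators, and their difference collapses, independently of
`q̃ᵃ, q̃ᵛ`, to `ρ₀ᵛ(1 - xᵃ) - ρ₀ᵃ(1 - xᵛ) + μ(ρ₀ᵃ - ρ₀ᵛ)`.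
-/

lemma cumulativeInfection_numerator_sub (ρa ρv μ xa xv qa qv : ℝ) :
    (ρa*(μ - (1-xv)*qv) + ρv*(1-xa)*(1-qa)) - (ρa*(1-xv)*(1-qv) + ρv*(μ - (1-xa)*qa))
      = ρv*(1-xa) - ρa*(1-xv) + μ*(ρa - ρv) := by
  ring

lemma stable_denominator_pos {T Δ μ : ℝ} (hΔ : 0 ≤ Δ) (hμ : (T + Δ)/2 < μ) :
    0 < (T - 2*μ - Δ) * (T - 2*μ + Δ) :=
  mul_pos_of_neg_of_neg (by linarith) (by linarith)

theorem stmt_8_general (h xa xv μ ρ0a ρ0v : ℝ)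
    (qa qv T Δ μhat CIa CIv : ℝ)
    (hΔ : Δ = Real.sqrt (T^2 - 4*h*(1-xa)*(1-xv)))
    (hμhat : μhat = (T + Δ)/2) (hstab : μhat < μ)
    (hCIa : CIa = 2*(ρ0a*(μ - (1-xv)*qv) + ρ0v*(1-xa)*(1-qa))
      / ((T - 2*μ - Δ) * (T - 2*μ + Δ)))
    (hCIv : CIv = 2*(ρ0a*(1-xv)*(1-qv) + ρ0v*(μ - (1-xa)*qa))
      / ((T - 2*μ - Δ) * (T - 2*μ + Δ))) :
    CIv ≤ CIa ↔ 0 ≤ ρ0v*(1-xa) - ρ0a*(1-xv) + μ*(ρ0a - ρ0v) := by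
  have hD := stable_denominator_pos (hΔ ▸ Real.sqrt_nonneg _) (hμhat ▸ hstab)
  rw [hCIa, hCIv, div_le_div_iff_of_pos_right hD, ← sub_nonneg, ← mul_sub,
    cumulativeInfection_numerator_sub, mul_nonneg_iff_of_pos_left two_pos]

/-- With generic initial conditions `ρ₀ᵃ, ρ₀ᵛ ≥ 0`, the cumulative
infections of the linearized two-group SIS dynamics satisfy
`CIᵃ ≥ CIᵛ ↔ ρ₀ᵛ(1-xa) - ρ₀ᵃ(1-xv) + μ(ρ₀ᵃ - ρ₀ᵛ) ≥ 0`. -/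
theorem stmt_8 (h q xa xv μ ρ0a ρ0v : ℝ)
    (hh : h ∈ Set.Ico (0:ℝ) 1) (hq : q ∈ Set.Ico (0:ℝ) 1)
    (hxa : 0 ≤ xa) (hxav : xa ≤ xv) (hxv : xv ≤ 1)
    (hρ0a : 0 ≤ ρ0a) (hρ0v : 0 ≤ ρ0v)
    (qa qv T Δ μhat CIa CIv : ℝ)
    (hqa : qa = h + (1-h)*q) (hqv : qv = h + (1-h)*(1-q))
    (hT : T = qa*(1-xa) + qv*(1-xv))
    (hΔ : Δ = Real.sqrt (T^2 - 4*h*(1-xa)*(1-xv)))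
    (hμhat : μhat = (T + Δ)/2) (hstab : μhat < μ)
    (hCIa : CIa = 2*(ρ0a*(μ - (1-xv)*qv) + ρ0v*(1-xa)*(1-qa))
      / ((T - 2*μ - Δ) * (T - 2*μ + Δ)))
    (hCIv : CIv = 2*(ρ0a*(1-xv)*(1-qv) + ρ0v*(μ - (1-xa)*qa))
      / ((T - 2*μ - Δ) * (T - 2*μ + Δ))) :
    CIv ≤ CIa ↔ 0 ≤ ρ0v*(1-xa) - ρ0a*(1-xv) + μ*(ρ0a - ρ0v) :=
  stmt_8_general h xa xv μ ρ0a ρ0v qa qv T Δ μhat CIa CIv hΔ hμhat hstab hCIa hCIv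
end

section
/- Assume $\mu > \hat\mu$, $\rho_0^a = \rho_0^v = \rho_0 > 0$, $0 \le x^a < x^v < 1$, $q \in (0,1)$, $h \in [0,1)$. Then the total cumulative infection $CI = q\,CI^a + (1-q)\,CI^v = 2\rho_0 \frac{\mu - (1-x^a)(\tilde{q}^a - q) - (1-x^v)(\tilde{q}^v - (1-q))}{(T-2\mu-\Delta)(T-2\mu+\Delta)}$ is strictly increasing in $h$. -/
/-!
After substituting the closed forms, both the numerator and the denominator of `CI` are affine
in `h`: the denominator is `4 (μ² - μ T + h (1-xa)(1-xv))`, positive because `μ` lies beyond the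
larger root `μ̂` of `X² - T X + h (1-xa)(1-xv)`. A quotient of affine functions is increasing
wherever its denominator is positive and its determinant is, and here the determinant is
`8 ρ₀ μ q (1-q) (xv - xa)²`.
-/

open Set

theorem strictMonoOn_affine_div_affine {s : Set ℝ} {α β γ δ : ℝ}
    (hden : ∀ h ∈ s, 0 < γ + δ * h) (hdet : 0 < β * γ - α * δ) :
    StrictMonoOn (fun h => (α + β * h) / (γ + δ * h)) s := by
  intro h₁ hh₁ h₂ hh₂ h₁₂
  rw [div_lt_div_iff₀ (hden h₁ hh₁) (hden h₂ hh₂)]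
  linear_combination mul_pos hdet (sub_pos.2 h₁₂)

theorem sub_sub_sqrt_mul_sub_add_sqrt {T d μ : ℝ} (hd : d ≤ T ^ 2) :
    (T - 2 * μ - √(T ^ 2 - d)) * (T - 2 * μ + √(T ^ 2 - d)) = 4 * μ ^ 2 - 4 * μ * T + d := by
  linear_combination -Real.sq_sqrt (sub_nonneg.2 hd)

theorem sub_sub_sqrt_mul_sub_add_sqrt_pos {T d μ : ℝ} (hμ : (T + √(T ^ 2 - d)) / 2 < μ) :
    0 < (T - 2 * μ - √(T ^ 2 - d)) * (T - 2 * μ + √(T ^ 2 - d)) := by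
  have := Real.sqrt_nonneg (T ^ 2 - d)
  exact mul_pos_of_neg_of_neg (by linarith) (by linarith)

theorem pos_of_add_sqrt_div_two_lt {T d μ : ℝ} (hT : 0 < T) (hμ : (T + √(T ^ 2 - d)) / 2 < μ) :
    0 < μ := by
  linarith [Real.sqrt_nonneg (T ^ 2 - d)]

theorem four_mul_le_sq_add_of_le_mul {u v a b h : ℝ} (ha : 0 ≤ a) (hb : 0 ≤ b)
    (hle : h ≤ u * v) : 4 * h * a * b ≤ (u * a + v * b) ^ 2 := by
  nlinarith [sq_nonneg (u * a - v * b), mul_nonneg (mul_nonneg ha hb) (sub_nonneg.2 hle)]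

theorem le_mul_homophily {q : ℝ} (hq₀ : 0 ≤ q) (hq₁ : q ≤ 1) (h : ℝ) :
    h ≤ (h + (1 - h) * q) * (h + (1 - h) * (1 - q)) := by
  nlinarith [mul_nonneg (sq_nonneg (1 - h)) (mul_nonneg hq₀ (sub_nonneg.2 hq₁))]

theorem stmt_9_general (q xa xv μ ρ0 : ℝ)
    (hq : q ∈ Set.Ioo (0:ℝ) 1)
    (hxav : xa < xv) (hxv : xv < 1)
    (hρ0 : 0 < ρ0)
    (qa qv T Δ μhat CI : ℝ → ℝ)
    (hqa : ∀ h, qa h = h + (1-h)*q) (hqv : ∀ h, qv h = h + (1-h)*(1-q))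
    (hT : ∀ h, T h = qa h*(1-xa) + qv h*(1-xv))
    (hΔ : ∀ h, Δ h = Real.sqrt ((T h)^2 - 4*h*(1-xa)*(1-xv)))
    (hμhat : ∀ h, μhat h = (T h + Δ h)/2)
    (hstab : ∀ h ∈ Set.Ico (0:ℝ) 1, μhat h < μ)
    (hCI : ∀ h, CI h =
      2*ρ0 * (μ - (1-xa)*(qa h - q) - (1-xv)*(qv h - (1-q)))
        / ((T h - 2*μ - Δ h) * (T h - 2*μ + Δ h))) :
    StrictMonoOn CI (Set.Ico (0:ℝ) 1) := by
  obtain ⟨hq₀, hq₁⟩ := hq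
  have hroot : ∀ h ∈ Ico (0:ℝ) 1, (T h + √(T h ^ 2 - 4 * h * (1 - xa) * (1 - xv))) / 2 < μ :=
    fun h hh => by rw [← hΔ, ← hμhat]; exact hstab h hh
  have hT₀ : 0 < T 0 := by
    rw [hT, hqa, hqv]
    nlinarith [mul_pos hq₀ (sub_pos.2 (hxav.trans hxv)), mul_pos (sub_pos.2 hq₁) (sub_pos.2 hxv)]
  have hμ : 0 < μ := pos_of_add_sqrt_div_two_lt hT₀ (hroot 0 ⟨le_rfl, one_pos⟩)
  set c := (1 - q) * (1 - xa) + q * (1 - xv)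
  set T₀ := q * (1 - xa) + (1 - q) * (1 - xv)
  have hden : ∀ h, (T h - 2 * μ - Δ h) * (T h - 2 * μ + Δ h)
      = 4 * (μ ^ 2 - μ * T₀) + 4 * ((1 - xa) * (1 - xv) - μ * c) * h := fun h => by
    have hdisc : 4 * h * (1 - xa) * (1 - xv) ≤ T h ^ 2 := by
      rw [hT, hqa, hqv]
      exact four_mul_le_sq_add_of_le_mul (by linarith) (by linarith)
        (le_mul_homophily hq₀.le hq₁.le h)
    rw [hΔ, sub_sub_sqrt_mul_sub_add_sqrt hdisc, hT, hqa, hqv]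
    ring
  refine (strictMonoOn_affine_div_affine (α := 2 * ρ0 * μ) (β := -(2 * ρ0 * c))
    (γ := 4 * (μ ^ 2 - μ * T₀)) (δ := 4 * ((1 - xa) * (1 - xv) - μ * c))
    (fun h hh => ?_) ?_).congr fun h _ => ?_
  · rw [← hden, hΔ]
    exact sub_sub_sqrt_mul_sub_add_sqrt_pos (hroot h hh)
  · linear_combination (8 * ρ0 * μ * q * (1 - q)) * pow_pos (sub_pos.2 hxav) 2
  · rw [hCI, hden, hqa, hqv]
    ring

/-- Assume stability `μ > μ̂(h)` on `[0,1)`, symmetric initial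
condition `ρ₀ > 0`, `0 ≤ xa < xv < 1`, `q ∈ (0,1)`.  Then the total cumulative
infection
`CI(h) = 2ρ₀ (μ - (1-xa)(qa(h) - q) - (1-xv)(qv(h) - (1-q))) / ((T-2μ-Δ)(T-2μ+Δ))`
is strictly increasing in `h` on `[0,1)`. -/
theorem stmt_9 (q xa xv μ ρ0 : ℝ)
    (hq : q ∈ Set.Ioo (0:ℝ) 1)
    (hxa : 0 ≤ xa) (hxav : xa < xv) (hxv : xv < 1)
    (hρ0 : 0 < ρ0)
    (qa qv T Δ μhat CI : ℝ → ℝ)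
    (hqa : ∀ h, qa h = h + (1-h)*q) (hqv : ∀ h, qv h = h + (1-h)*(1-q))
    (hT : ∀ h, T h = qa h*(1-xa) + qv h*(1-xv))
    (hΔ : ∀ h, Δ h = Real.sqrt ((T h)^2 - 4*h*(1-xa)*(1-xv)))
    (hμhat : ∀ h, μhat h = (T h + Δ h)/2)
    (hstab : ∀ h ∈ Set.Ico (0:ℝ) 1, μhat h < μ)
    (hCI : ∀ h, CI h =
      2*ρ0 * (μ - (1-xa)*(qa h - q) - (1-xv)*(qv h - (1-q)))
        / ((T h - 2*μ - Δ h) * (T h - 2*μ + Δ h))) :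
    StrictMonoOn CI (Set.Ico (0:ℝ) 1) :=
  stmt_9_general q xa xv μ ρ0 hq hxav hxv hρ0 qa qv T Δ μhat CI hqa hqv hT hΔ hμhat hstab hCI
end

section
/- Under the same assumptions, the total cumulative infection $CI$ is strictly decreasing in each vaccination rate $x^a$ and $x^v$, and strictly increasing in the anti-vaxxer share $q$ (given $x^a < x^v$). -/
/-!
Writing `a = 1 - xa`, `v = 1 - xv` for the susceptible fractions, the closed form collapses to
`CI = ρ₀/2 · N/M` with `N = μ - h (a (1-q) + v q)` and `M = P(μ)`, where
`P(x) = x² - T x + h a v` is the characteristic polynomial whose largest root is `μ̂`.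
Stability `μ > μ̂` gives `M > 0`, and since `P(h a) ≤ 0` it also gives `μ > h a ≥ h v`.
In each of `a`, `v`, `q` separately both `N` and `M` are affine, so `N/M` is monotone with the
sign of a 2×2 determinant; these determinants are `q (μ - h v)²`, `(1-q) (μ - h a)²` and
`(a - v)(μ - h a)(μ - h v)`, all positive.
-/

section Quadratic

variable {T c μ y : ℝ}

theorem sq_sub_mul_add_pos_of_largest_root_lt (hμ : (T + √(T ^ 2 - 4 * c)) / 2 < μ) :
    0 < μ ^ 2 - T * μ + c := by
  by_cases hd : 0 ≤ T ^ 2 - 4 * c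
  · have hs := Real.sq_sqrt hd
    nlinarith [Real.sqrt_nonneg (T ^ 2 - 4 * c)]
  · nlinarith [sq_nonneg (2 * μ - T)]

theorem discrim_nonneg_of_nonpos (hy : y ^ 2 - T * y + c ≤ 0) : 0 ≤ T ^ 2 - 4 * c := by
  nlinarith [sq_nonneg (2 * y - T)]

theorem le_largest_root_of_nonpos (hy : y ^ 2 - T * y + c ≤ 0) :
    y ≤ (T + √(T ^ 2 - 4 * c)) / 2 := by
  have := Real.abs_le_sqrt (show (2 * y - T) ^ 2 ≤ T ^ 2 - 4 * c by nlinarith)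
  linarith [le_abs_self (2 * y - T)]

end Quadratic

section TwoGroupSIS

variable {h μ ρ₀ q a v : ℝ}

def charTrace (h q a v : ℝ) : ℝ := (h + (1 - h) * q) * a + (h + (1 - h) * (1 - q)) * v

def ciNum (h μ q a v : ℝ) : ℝ := μ - h * (a * (1 - q) + v * q)

def ciDen (h μ q a v : ℝ) : ℝ := μ ^ 2 - charTrace h q a v * μ + h * a * v

theorem charPoly_mul_nonpos (h0 : 0 ≤ h) (h1 : h ≤ 1) (hq : 0 ≤ q) (ha : 0 ≤ a) (hva : v ≤ a) :
    (h * a) ^ 2 - charTrace h q a v * (h * a) + h * a * v ≤ 0 := by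
  have hP : (h * a) ^ 2 - charTrace h q a v * (h * a) + h * a * v
      = -(h * a * (1 - h) * q * (a - v)) := by
    unfold charTrace; ring
  rw [hP, neg_nonpos]
  have := sub_nonneg.2 h1
  have := sub_nonneg.2 hva
  positivity

theorem ci_closed_form (hdisc : 0 ≤ charTrace h q a v ^ 2 - 4 * (h * a * v)) :
    2 * ρ₀ * (μ - a * ((h + (1 - h) * q) - q) - v * ((h + (1 - h) * (1 - q)) - (1 - q)))
      / ((charTrace h q a v - 2 * μ - √(charTrace h q a v ^ 2 - 4 * h * a * v))
        * (charTrace h q a v - 2 * μ + √(charTrace h q a v ^ 2 - 4 * h * a * v)))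
      = ρ₀ / 2 * (ciNum h μ q a v / ciDen h μ q a v) := by
  have hs := Real.sq_sqrt (by linarith : 0 ≤ charTrace h q a v ^ 2 - 4 * h * a * v)
  rw [show (charTrace h q a v - 2 * μ - √(charTrace h q a v ^ 2 - 4 * h * a * v))
      * (charTrace h q a v - 2 * μ + √(charTrace h q a v ^ 2 - 4 * h * a * v))
      = 4 * ciDen h μ q a v by unfold ciDen; linear_combination -hs]
  unfold ciNum
  ring

theorem ciNum_div_ciDen_lt_of_lt_left {a₁ a₂ : ℝ} (hd₁ : 0 < ciDen h μ q a₁ v)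
    (hd₂ : 0 < ciDen h μ q a₂ v) (hq : 0 < q) (hμ : h * v < μ) (h12 : a₁ < a₂) :
    ciNum h μ q a₁ v / ciDen h μ q a₁ v < ciNum h μ q a₂ v / ciDen h μ q a₂ v := by
  rw [div_lt_div_iff₀ hd₁ hd₂, ← sub_pos]
  have hdet : ciNum h μ q a₂ v * ciDen h μ q a₁ v - ciNum h μ q a₁ v * ciDen h μ q a₂ v
      = (a₂ - a₁) * q * (μ - h * v) ^ 2 := by
    unfold ciNum ciDen charTrace; ring
  rw [hdet]
  exact mul_pos (mul_pos (sub_pos.2 h12) hq) (pow_pos (sub_pos.2 hμ) 2)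

theorem ciNum_div_ciDen_lt_of_lt_right {v₁ v₂ : ℝ} (hd₁ : 0 < ciDen h μ q a v₁)
    (hd₂ : 0 < ciDen h μ q a v₂) (hq : q < 1) (hμ : h * a < μ) (h12 : v₁ < v₂) :
    ciNum h μ q a v₁ / ciDen h μ q a v₁ < ciNum h μ q a v₂ / ciDen h μ q a v₂ := by
  rw [div_lt_div_iff₀ hd₁ hd₂, ← sub_pos]
  have hdet : ciNum h μ q a v₂ * ciDen h μ q a v₁ - ciNum h μ q a v₁ * ciDen h μ q a v₂
      = (v₂ - v₁) * (1 - q) * (μ - h * a) ^ 2 := by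
    unfold ciNum ciDen charTrace; ring
  rw [hdet]
  exact mul_pos (mul_pos (sub_pos.2 h12) (sub_pos.2 hq)) (pow_pos (sub_pos.2 hμ) 2)

theorem ciNum_div_ciDen_lt_of_lt_share {q₁ q₂ : ℝ} (hd₁ : 0 < ciDen h μ q₁ a v)
    (hd₂ : 0 < ciDen h μ q₂ a v) (hva : v < a) (hμa : h * a < μ) (hμv : h * v < μ)
    (h12 : q₁ < q₂) :
    ciNum h μ q₁ a v / ciDen h μ q₁ a v < ciNum h μ q₂ a v / ciDen h μ q₂ a v := by
  rw [div_lt_div_iff₀ hd₁ hd₂, ← sub_pos]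
  have hdet : ciNum h μ q₂ a v * ciDen h μ q₁ a v - ciNum h μ q₁ a v * ciDen h μ q₂ a v
      = (q₂ - q₁) * (a - v) * (μ - h * a) * (μ - h * v) := by
    unfold ciNum ciDen charTrace; ring
  rw [hdet]
  exact mul_pos (mul_pos (mul_pos (sub_pos.2 h12) (sub_pos.2 hva)) (sub_pos.2 hμa))
    (sub_pos.2 hμv)

end TwoGroupSIS

/-- Under the same assumptions (stability, symmetric initial
condition `ρ₀ > 0`, `h ∈ [0,1)`), the total cumulative infection
`CI(xa, xv, q)` is strictly decreasing in each vaccination rate `xa` and `xv`,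
and strictly increasing in the anti-vaxxer share `q` (given `xa < xv`). -/
theorem stmt_11 (h μ ρ0 : ℝ)
    (hh : h ∈ Set.Ico (0:ℝ) 1) (hρ0 : 0 < ρ0)
    (qa qv : ℝ → ℝ) (T Δ μhat CI : ℝ → ℝ → ℝ → ℝ)
    (hqa : ∀ q, qa q = h + (1-h)*q) (hqv : ∀ q, qv q = h + (1-h)*(1-q))
    (hT : ∀ xa xv q, T xa xv q = qa q*(1-xa) + qv q*(1-xv))
    (hΔ : ∀ xa xv q, Δ xa xv q =
      Real.sqrt ((T xa xv q)^2 - 4*h*(1-xa)*(1-xv)))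
    (hμhat : ∀ xa xv q, μhat xa xv q = (T xa xv q + Δ xa xv q)/2)
    (hstab : ∀ xa xv q, 0 ≤ xa → xa < xv → xv < 1 → q ∈ Set.Ioo (0:ℝ) 1 →
      μhat xa xv q < μ)
    (hCI : ∀ xa xv q, CI xa xv q =
      2*ρ0 * (μ - (1-xa)*(qa q - q) - (1-xv)*(qv q - (1-q)))
        / ((T xa xv q - 2*μ - Δ xa xv q) * (T xa xv q - 2*μ + Δ xa xv q))) :
    (∀ xa₁ xa₂ xv q, 0 ≤ xa₁ → xa₁ < xa₂ → xa₂ < xv → xv < 1 →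
        q ∈ Set.Ioo (0:ℝ) 1 → CI xa₂ xv q < CI xa₁ xv q)
    ∧ (∀ xa xv₁ xv₂ q, 0 ≤ xa → xa < xv₁ → xv₁ < xv₂ → xv₂ < 1 →
        q ∈ Set.Ioo (0:ℝ) 1 → CI xa xv₂ q < CI xa xv₁ q)
    ∧ (∀ xa xv q₁ q₂, 0 ≤ xa → xa < xv → xv < 1 →
        q₁ ∈ Set.Ioo (0:ℝ) 1 → q₂ ∈ Set.Ioo (0:ℝ) 1 → q₁ < q₂ →
        CI xa xv q₁ < CI xa xv q₂) := by
  obtain ⟨h0, h1⟩ := hh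
  have key : ∀ xa xv q, 0 ≤ xa → xa < xv → xv < 1 → q ∈ Set.Ioo (0:ℝ) 1 →
      CI xa xv q = ρ0 / 2 * (ciNum h μ q (1 - xa) (1 - xv) / ciDen h μ q (1 - xa) (1 - xv))
      ∧ 0 < ciDen h μ q (1 - xa) (1 - xv) ∧ h * (1 - xa) < μ ∧ h * (1 - xv) < μ := by
    intro xa xv q hxa hxav hxv hq
    have hT' : T xa xv q = charTrace h q (1 - xa) (1 - xv) := by rw [hT, hqa, hqv, charTrace]
    have hst := hstab xa xv q hxa hxav hxv hq
    rw [hμhat, hΔ, hT', mul_assoc 4, mul_assoc 4] at hst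
    have hP := charPoly_mul_nonpos h0 h1.le hq.1.le (by linarith) (by linarith : 1 - xv ≤ 1 - xa)
    have hμa := (le_largest_root_of_nonpos hP).trans_lt hst
    refine ⟨?_, sq_sub_mul_add_pos_of_largest_root_lt hst, hμa, lt_of_le_of_lt ?_ hμa⟩
    · rw [hCI, hΔ, hT', hqa, hqv]
      exact ci_closed_form (discrim_nonneg_of_nonpos hP)
    · exact mul_le_mul_of_nonneg_left (by linarith) h0
  have hρ : 0 < ρ0 / 2 := half_pos hρ0
  refine ⟨fun xa₁ xa₂ xv q hxa h12 h2v hv hq => ?_, fun xa xv₁ xv₂ q hxa ha1 h12 hv hq => ?_,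
    fun xa xv q₁ q₂ hxa hav hv hq₁ hq₂ h12 => ?_⟩
  · obtain ⟨hCI₁, hd₁, -, hμv⟩ := key xa₁ xv q hxa (h12.trans h2v) hv hq
    obtain ⟨hCI₂, hd₂, -⟩ := key xa₂ xv q (hxa.trans h12.le) h2v hv hq
    rw [hCI₁, hCI₂]
    exact mul_lt_mul_of_pos_left
      (ciNum_div_ciDen_lt_of_lt_left hd₂ hd₁ hq.1 hμv (by linarith)) hρ
  · obtain ⟨hCI₁, hd₁, hμa, -⟩ := key xa xv₁ q hxa ha1 (h12.trans hv) hq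
    obtain ⟨hCI₂, hd₂, -⟩ := key xa xv₂ q hxa (ha1.trans h12) hv hq
    rw [hCI₁, hCI₂]
    exact mul_lt_mul_of_pos_left
      (ciNum_div_ciDen_lt_of_lt_right hd₂ hd₁ hq.2 hμa (by linarith)) hρ
  · obtain ⟨hCI₁, hd₁, hμa, hμv⟩ := key xa xv q₁ hxa hav hv hq₁
    obtain ⟨hCI₂, hd₂, -⟩ := key xa xv q₂ hxa hav hv hq₂
    rw [hCI₁, hCI₂]
    exact mul_lt_mul_of_pos_left
      (ciNum_div_ciDen_lt_of_lt_share hd₁ hd₂ (by linarith) hμa hμv h12) hρ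
end

section
/- Assume $\mu > \hat\mu(h)$ for all $h$ in an interval $[0,\bar h] \subseteq [0,1)$, with $0 \le x^a \le x^v \le 1$, $q \in (0,1)$, and $(x^a,x^v) \ne (1,1)$. Then the leading (largest) eigenvalue $e_1(h) = \hat\mu(h) - \mu < 0$ of the Jacobian is nondecreasing in $h$, i.e., $|e_1(h)|$ is nonincreasing in $h$: higher homophily slows asymptotic convergence to the disease-free state. -/
/-!
`μ̂(h)` is the larger root `r(h)` of `x² - (T₀ + hD)x + hP`, where `T(h) = T₀ + hD` is affine in `h`
and `P = (1-xa)(1-xv)`. Evaluating the quadratic for `h₂ ≥ h₁` at `r(h₁)` gives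
`(h₂ - h₁)(P - D r(h₁))`, so `r(h₁) ≤ r(h₂)` as soon as `D r(h₁) ≥ P`. That inequality holds for
every `h`, since `(D √disc)² - (2P - D T(h))² = 4P(D T₀ - P)` and
`D T₀ - P = q(1-q)(xv - xa)² ≥ 0`.
-/

/-- The larger root of `x² - b x + c`; it is `b / 2` when the discriminant is negative. -/
noncomputable def quadRoot (b c : ℝ) : ℝ := (b + √(b ^ 2 - 4 * c)) / 2

lemma quadRoot_isRoot {b c : ℝ} (hdisc : 0 ≤ b ^ 2 - 4 * c) :
    quadRoot b c ^ 2 - b * quadRoot b c + c = 0 := by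
  unfold quadRoot
  linear_combination Real.sq_sqrt hdisc / 4

lemma le_mul_quadRoot {b c d p : ℝ} (hd : 0 ≤ d)
    (h : (2 * p - d * b) ^ 2 ≤ d ^ 2 * (b ^ 2 - 4 * c)) : p ≤ d * quadRoot b c := by
  have hsqrt : |2 * p - d * b| ≤ d * √(b ^ 2 - 4 * c) := by
    calc |2 * p - d * b| ≤ √(d ^ 2 * (b ^ 2 - 4 * c)) := Real.abs_le_sqrt h
      _ = d * √(b ^ 2 - 4 * c) := by rw [Real.sqrt_mul (sq_nonneg d), Real.sqrt_sq hd]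
  unfold quadRoot
  linarith [le_abs_self (2 * p - d * b)]

lemma le_quadRoot {b c x : ℝ} (h : x ^ 2 - b * x + c ≤ 0) : x ≤ quadRoot b c := by
  simpa using le_mul_quadRoot (d := 1) zero_le_one (by nlinarith)

section LinearFamily

variable {b₀ d p : ℝ}

lemma discr_linear_nonneg (hp : 0 ≤ p) (hpd : p ≤ d * b₀) (h : ℝ) :
    0 ≤ (b₀ + h * d) ^ 2 - 4 * (h * p) := by
  rcases le_total 0 h with h0 | h0
  · nlinarith [sq_nonneg (b₀ - h * d), mul_nonneg h0 (sub_nonneg.2 hpd)]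
  · nlinarith [sq_nonneg (b₀ + h * d), mul_nonneg (neg_nonneg.2 h0) hp]

lemma le_mul_quadRoot_linear (hd : 0 ≤ d) (hp : 0 ≤ p) (hpd : p ≤ d * b₀) (h : ℝ) :
    p ≤ d * quadRoot (b₀ + h * d) (h * p) :=
  le_mul_quadRoot hd <| by nlinarith [mul_nonneg hp (sub_nonneg.2 hpd)]

theorem monotone_quadRoot_linear (hd : 0 ≤ d) (hp : 0 ≤ p) (hpd : p ≤ d * b₀) :
    Monotone fun h => quadRoot (b₀ + h * d) (h * p) := by
  intro h₁ h₂ h₁₂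
  set r := quadRoot (b₀ + h₁ * d) (h₁ * p)
  have hroot : r ^ 2 - (b₀ + h₁ * d) * r + h₁ * p = 0 :=
    quadRoot_isRoot (discr_linear_nonneg hp hpd h₁)
  have hkey : p ≤ d * r := le_mul_quadRoot_linear hd hp hpd h₁
  apply le_quadRoot
  calc r ^ 2 - (b₀ + h₂ * d) * r + h₂ * p
      = (r ^ 2 - (b₀ + h₁ * d) * r + h₁ * p) + (h₂ - h₁) * (p - d * r) := by ring
    _ ≤ 0 := by
      rw [hroot, zero_add]
      exact mul_nonpos_of_nonneg_of_nonpos (sub_nonneg.2 h₁₂) (sub_nonpos.2 hkey)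

end LinearFamily

theorem stmt_12_general (q xa xv μ hbar : ℝ)
    (hq : q ∈ Set.Ioo (0:ℝ) 1)
    (hxav : xa ≤ xv) (hxv : xv ≤ 1)
    (qa qv T Δ μhat : ℝ → ℝ)
    (hqa : ∀ h, qa h = h + (1-h)*q) (hqv : ∀ h, qv h = h + (1-h)*(1-q))
    (hT : ∀ h, T h = qa h*(1-xa) + qv h*(1-xv))
    (hΔ : ∀ h, Δ h = Real.sqrt ((T h)^2 - 4*h*(1-xa)*(1-xv)))
    (hμhat : ∀ h, μhat h = (T h + Δ h)/2)
    (hstab : ∀ h ∈ Set.Icc 0 hbar, μhat h < μ) :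
    (∀ h ∈ Set.Icc 0 hbar, μhat h - μ < 0)
    ∧ MonotoneOn (fun h => μhat h - μ) (Set.Icc 0 hbar)
    ∧ AntitoneOn (fun h => |μhat h - μ|) (Set.Icc 0 hbar) := by
  obtain ⟨hq0, hq1⟩ := hq
  have hV : 0 ≤ 1 - xv := by linarith
  have hA : 0 ≤ 1 - xa := by linarith
  have hμhat_eq : μhat = fun h => quadRoot ((q * (1 - xa) + (1 - q) * (1 - xv))
      + h * ((1 - q) * (1 - xa) + q * (1 - xv))) (h * ((1 - xa) * (1 - xv))) := by
    funext h
    rw [hμhat, hΔ, hT, hqa, hqv, quadRoot]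
    ring_nf
  have hmono : Monotone μhat := by
    rw [hμhat_eq]
    refine monotone_quadRoot_linear (by positivity) (mul_nonneg hA hV) ?_
    nlinarith [mul_nonneg (mul_nonneg hq0.le (sub_nonneg.2 hq1.le)) (sq_nonneg (xv - xa))]
  have hneg : ∀ h ∈ Set.Icc 0 hbar, μhat h - μ < 0 := fun h hh => sub_neg.2 (hstab h hh)
  refine ⟨hneg, fun a _ b _ hab => sub_le_sub_right (hmono hab) μ, fun a ha b hb hab => ?_⟩
  simp only [abs_of_neg (hneg a ha), abs_of_neg (hneg b hb)]
  linarith [hmono hab]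

/-- Assume `μ > μ̂(h)` for all `h ∈ [0, h̄] ⊆ [0,1)`, with
`0 ≤ xa ≤ xv ≤ 1`, `q ∈ (0,1)` and `(xa,xv) ≠ (1,1)`.  Then the leading
eigenvalue `e₁(h) = μ̂(h) - μ` of the Jacobian is negative and nondecreasing in
`h` on `[0, h̄]`, i.e. `|e₁(h)|` is nonincreasing in `h`: higher homophily slows
asymptotic convergence to the disease-free state. -/
theorem stmt_12 (q xa xv μ hbar : ℝ)
    (hq : q ∈ Set.Ioo (0:ℝ) 1)
    (hxa : 0 ≤ xa) (hxav : xa ≤ xv) (hxv : xv ≤ 1)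
    (hne : (xa, xv) ≠ (1, 1))
    (hhbar : 0 ≤ hbar) (hhbar1 : hbar < 1)
    (qa qv T Δ μhat : ℝ → ℝ)
    (hqa : ∀ h, qa h = h + (1-h)*q) (hqv : ∀ h, qv h = h + (1-h)*(1-q))
    (hT : ∀ h, T h = qa h*(1-xa) + qv h*(1-xv))
    (hΔ : ∀ h, Δ h = Real.sqrt ((T h)^2 - 4*h*(1-xa)*(1-xv)))
    (hμhat : ∀ h, μhat h = (T h + Δ h)/2)
    (hstab : ∀ h ∈ Set.Icc 0 hbar, μhat h < μ) :
    (∀ h ∈ Set.Icc 0 hbar, μhat h - μ < 0)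
    ∧ MonotoneOn (fun h => μhat h - μ) (Set.Icc 0 hbar)
    ∧ AntitoneOn (fun h => |μhat h - μ|) (Set.Icc 0 hbar) :=
  stmt_12_general q xa xv μ hbar hq hxav hxv qa qv T Δ μhat hqa hqv hT hΔ hμhat hstab
end

section
/- The leading eigenvalue $e_1 = \hat\mu - \mu$ is nonincreasing in both $x^a$ and $x^v$ (so $|e_1|$ is nondecreasing in each vaccination rate): more vaccination speeds up convergence of the epidemic to the disease-free state. -/
/-!
Write `u = 1 - xᵃ`, `v = 1 - xᵛ`. Then `μ̂` is the larger root of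
`p(λ) = λ² - (qᵃu + qᵛv)λ + h u v = (λ - qᵃu)(λ - qᵛv) - (qᵃqᵛ - h) u v`,
and `qᵃqᵛ - h = (1 - h)² q (1 - q) ≥ 0`. Hence `p(qᵛv) ≤ 0`, so `μ̂ ≥ qᵛv`, and to the
right of `qᵛv` the slope `∂p/∂u = h v - qᵃλ` is nonpositive. Increasing `u` therefore makes `p`
nonpositive at the old root, which pushes the larger root up: `μ̂` grows with `u`, i.e. it
decreases with `xᵃ`, and symmetrically with `xᵛ`. Since `μ̂ < μ`, `|μ̂ - μ| = μ - μ̂`.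
-/

open Set

noncomputable def largerRoot (b c : ℝ) : ℝ := (b + √(b ^ 2 - 4 * c)) / 2

lemma le_largerRoot_of_nonpos {b c x : ℝ} (hx : x ^ 2 - b * x + c ≤ 0) :
    x ≤ largerRoot b c := by
  have : 2 * x - b ≤ √(b ^ 2 - 4 * c) :=
    calc 2 * x - b ≤ |2 * x - b| := le_abs_self _
      _ = √((2 * x - b) ^ 2) := (Real.sqrt_sq_eq_abs _).symm
      _ ≤ √(b ^ 2 - 4 * c) := Real.sqrt_le_sqrt (by nlinarith)
  unfold largerRoot
  linarith

lemma largerRoot_isRoot {b c : ℝ} (hd : 4 * c ≤ b ^ 2) :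
    largerRoot b c ^ 2 - b * largerRoot b c + c = 0 := by
  have hs := Real.sq_sqrt (sub_nonneg.2 hd)
  unfold largerRoot
  linear_combination hs / 4

lemma monotoneOn_largerRoot {A B H v : ℝ} (hA : 0 ≤ A) (hH : H ≤ A * B) (hv : 0 ≤ v) :
    MonotoneOn (fun u => largerRoot (A * u + B * v) (H * u * v)) (Ici 0) := by
  intro u₁ hu₁ u₂ _ hu
  set r := largerRoot (A * u₁ + B * v) (H * u₁ * v)
  have hgap : 0 ≤ (A * B - H) * (u₁ * v) := mul_nonneg (by linarith) (mul_nonneg hu₁ hv)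
  have hroot : r ^ 2 - (A * u₁ + B * v) * r + H * u₁ * v = 0 :=
    largerRoot_isRoot (by nlinarith [sq_nonneg (A * u₁ - B * v)])
  have hBv : B * v ≤ r := le_largerRoot_of_nonpos (by nlinarith)
  have hslope : H * v ≤ A * r := by
    nlinarith [mul_le_mul_of_nonneg_left hBv hA, mul_le_mul_of_nonneg_right hH hv]
  exact le_largerRoot_of_nonpos
    (by nlinarith [mul_nonneg (sub_nonneg.2 hu) (sub_nonneg.2 hslope)])

lemma AntitoneOn.monotoneOn_abs_sub {α : Type*} [Preorder α] {f : α → ℝ} {s : Set α}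
    {μ : ℝ} (hf : AntitoneOn f s) (hlt : ∀ x ∈ s, f x < μ) :
    MonotoneOn (fun x => |f x - μ|) s := by
  intro x hx y hy hxy
  simp only [abs_of_neg (sub_neg.2 (hlt x hx)), abs_of_neg (sub_neg.2 (hlt y hy))]
  linarith [hf hx hy hxy]

/-- The leading eigenvalue `e₁ = μ̂ - μ` is nonincreasing in both
vaccination rates `xa` and `xv` (so `|e₁|` is nondecreasing in each, given
stability `μ > μ̂`): more vaccination speeds up convergence to the disease-free
state. -/
theorem stmt_13 (h q μ : ℝ)
    (hh : h ∈ Set.Icc (0:ℝ) 1) (hq : q ∈ Set.Icc (0:ℝ) 1)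
    (qa qv : ℝ) (T Δ μhat : ℝ → ℝ → ℝ)
    (hqa : qa = h + (1-h)*q) (hqv : qv = h + (1-h)*(1-q))
    (hT : ∀ xa xv, T xa xv = qa*(1-xa) + qv*(1-xv))
    (hΔ : ∀ xa xv, Δ xa xv = Real.sqrt ((T xa xv)^2 - 4*h*(1-xa)*(1-xv)))
    (hμhat : ∀ xa xv, μhat xa xv = (T xa xv + Δ xa xv)/2)
    (hstab : ∀ xa ∈ Set.Icc (0:ℝ) 1, ∀ xv ∈ Set.Icc (0:ℝ) 1, μhat xa xv < μ) :
    (∀ xv ∈ Set.Icc (0:ℝ) 1,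
      AntitoneOn (fun xa => μhat xa xv - μ) (Set.Icc (0:ℝ) 1))
    ∧ (∀ xa ∈ Set.Icc (0:ℝ) 1,
      AntitoneOn (fun xv => μhat xa xv - μ) (Set.Icc (0:ℝ) 1))
    ∧ (∀ xv ∈ Set.Icc (0:ℝ) 1,
      MonotoneOn (fun xa => |μhat xa xv - μ|) (Set.Icc (0:ℝ) 1))
    ∧ (∀ xa ∈ Set.Icc (0:ℝ) 1,
      MonotoneOn (fun xv => |μhat xa xv - μ|) (Set.Icc (0:ℝ) 1)) := by
  obtain ⟨hh0, hh1⟩ := hh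
  obtain ⟨hq0, hq1⟩ := hq
  have hqa0 : 0 ≤ qa := by rw [hqa]; nlinarith
  have hqv0 : 0 ≤ qv := by rw [hqv]; nlinarith
  have hprod : h ≤ qa * qv := by
    rw [hqa, hqv]
    nlinarith [mul_nonneg (mul_nonneg hq0 (sub_nonneg.2 hq1)) (sq_nonneg (1 - h))]
  have hμ : ∀ xa xv,
      μhat xa xv = largerRoot (qa * (1 - xa) + qv * (1 - xv)) (h * (1 - xa) * (1 - xv)) := by
    intro xa xv
    rw [hμhat, hΔ, hT, largerRoot]
    simp only [mul_assoc]
  have hanti_a : ∀ xv ∈ Icc (0:ℝ) 1, AntitoneOn (fun xa => μhat xa xv) (Icc 0 1) := by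
    intro xv hxv x hx y hy hxy
    simp only [hμ]
    exact monotoneOn_largerRoot hqa0 hprod (sub_nonneg.2 hxv.2)
      (sub_nonneg.2 hy.2) (sub_nonneg.2 hx.2) (by linarith)
  have hanti_v : ∀ xa ∈ Icc (0:ℝ) 1, AntitoneOn (fun xv => μhat xa xv) (Icc 0 1) := by
    intro xa hxa x hx y hy hxy
    simp only [hμ, add_comm (qa * _), mul_right_comm h (1 - xa)]
    exact monotoneOn_largerRoot hqv0 (mul_comm qa qv ▸ hprod) (sub_nonneg.2 hxa.2)
      (sub_nonneg.2 hy.2) (sub_nonneg.2 hx.2) (by linarith)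
  refine ⟨fun xv hxv x hx y hy hxy => sub_le_sub_right (hanti_a xv hxv hx hy hxy) μ,
    fun xa hxa x hx y hy hxy => sub_le_sub_right (hanti_v xa hxa hx hy hxy) μ,
    fun xv hxv => (hanti_a xv hxv).monotoneOn_abs_sub fun xa hxa => hstab xa hxa xv hxv,
    fun xa hxa => (hanti_v xa hxa).monotoneOn_abs_sub fun xv hxv => hstab xa hxa xv hxv⟩
end

section
/- In the proportional-risk (NV-risk) case with extreme anti-vaxxers, the equilibrium vaccination rate of vaxxers is $x^v = \frac{k}{(h-1)kq + k + 1}$, i.e., $x^v$ is the unique solution of $x^v = k[\tilde{q}^v(1-x^v) + (1-\tilde{q}^v)]$ with $x^a = 0$, where $\tilde{q}^v = h+(1-h)(1-q)$. Moreover this $x^v$ is strictly decreasing in $h$ and strictly increasing in $q$ for $k > 0$, $q \in (0,1)$, $h \in [0,1)$, provided $kq(1-h) < 1$. -/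
/-- In the proportional-risk (NV-risk) case with extreme
anti-vaxxers (`xa = 0`), the equilibrium vaccination rate of vaxxers,
`xᵛ(h,q) = k/((h-1)kq + k + 1)`, is the unique solution of
`x = k[qv(1-x) + (1-qv)(1-0)]` where `qv = h+(1-h)(1-q)`; moreover it is
strictly decreasing in `h` and strictly increasing in `q` for `k > 0`,
`q ∈ (0,1)`, `h ∈ [0,1)`, provided `kq(1-h) < 1`. -/
theorem stmt_15 (k : ℝ) (hk : 0 < k)
    (xveq : ℝ → ℝ → ℝ)
    (hxveq : ∀ h q, xveq h q = k / ((h-1)*k*q + k + 1)) :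
    (∀ h q, h ∈ Set.Ico (0:ℝ) 1 → q ∈ Set.Ioo (0:ℝ) 1 → k*q*(1-h) < 1 →
      ∀ x : ℝ,
        x = k * ((h + (1-h)*(1-q)) * (1-x) + (1 - (h + (1-h)*(1-q))) * (1-0))
        ↔ x = xveq h q)
    ∧ (∀ h₁ h₂ q, h₁ ∈ Set.Ico (0:ℝ) 1 → h₂ ∈ Set.Ico (0:ℝ) 1 →
        q ∈ Set.Ioo (0:ℝ) 1 → k*q*(1-h₁) < 1 → k*q*(1-h₂) < 1 →
        h₁ < h₂ → xveq h₂ q < xveq h₁ q)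
    ∧ (∀ h q₁ q₂, h ∈ Set.Ico (0:ℝ) 1 →
        q₁ ∈ Set.Ioo (0:ℝ) 1 → q₂ ∈ Set.Ioo (0:ℝ) 1 →
        k*q₁*(1-h) < 1 → k*q₂*(1-h) < 1 →
        q₁ < q₂ → xveq h q₁ < xveq h q₂) := by
  have hden : ∀ h q : ℝ, k*q*(1-h) < 1 → 0 < (h-1)*k*q + k + 1 := by
    intro h q hlt
    nlinarith
  refine ⟨?_, ?_, ?_⟩
  · intro h q hh hq hlt x
    have hd := hden h q hlt
    rw [hxveq, eq_div_iff (ne_of_gt hd)]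
    constructor <;> intro hx <;> nlinarith [hx]
  · intro h₁ h₂ q hh₁ hh₂ hq hlt₁ hlt₂ hlt
    have hd₁ := hden h₁ q hlt₁
    have hd₂ := hden h₂ q hlt₂
    rw [hxveq, hxveq]
    apply div_lt_div_of_pos_left hk hd₁
    nlinarith [mul_pos (mul_pos hk hq.1) (sub_pos.mpr hlt)]
  · intro h q₁ q₂ hh hq₁ hq₂ hlt₁ hlt₂ hlt
    have hd₁ := hden h q₁ hlt₁
    have hd₂ := hden h q₂ hlt₂
    rw [hxveq, hxveq]
    apply div_lt_div_of_pos_left hk hd₂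
    nlinarith [mul_pos (mul_pos (sub_pos.mpr hh.2) hk) (sub_pos.mpr hlt)]
end

section
/- In the NV-risk model with $x^a = 0$ and $x^v = \frac{k}{(h-1)kq+k+1}$, the total derivative of the vaxxer cumulative infection with respect to homophily is $\frac{dCI^v}{dh} = -\frac{kq(k(h^2(q-1)+2h(\mu-q)-\mu^2+q)+\mu-1)}{2(\mu^2((h-1)kq+k+1) - \mu((h-1)hkq+hk+h+1)+(h-1)hkq+h)^2}$, which is strictly positive whenever $k > \frac{\mu-1}{\mu^2 - 2h\mu + h^2(1-q) + 2hq - q}$ (and the latter denominator is positive). -/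
/-!
After clearing the denominator `(h-1)kq + k + 1` of `xᵛ`, the cumulative infection `CIᵛ` is, on the
open half-line where `xᵛ ≤ 1`, a ratio `N/(4E)` of two quadratics in `h`: the square root disappears
because its two conjugate occurrences multiply to `(T - 2μ)² - Δ² = 4(μ² - μT + h(1 - xᵛ))`.
The denominator `E` is positive since `μ` lies above the larger root `μ̂ = (T + Δ)/2` of
`X² - TX + h(1 - xᵛ)`, so the quotient rule gives the formula, whose numerator equals
`kq(kD - (μ - 1))` with `D = μ² - 2hμ + h²(1-q) + 2hq - q`.
-/

open Filter Topology Set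

theorem four_mul_mul_le_sq_add_mul {a b c s : ℝ} (hs : 0 ≤ s) (hc : c ≤ a * b) :
    4 * c * s ≤ (a + b * s) ^ 2 := by
  nlinarith [sq_nonneg (a - b * s), mul_le_mul_of_nonneg_right hc hs]

theorem le_mixture_mul_mixture {q : ℝ} (hq : q ∈ Icc (0 : ℝ) 1) (h : ℝ) :
    h ≤ (h + (1 - h) * q) * (h + (1 - h) * (1 - q)) := by
  have : 0 ≤ (1 - h) ^ 2 * (q * (1 - q)) :=
    mul_nonneg (sq_nonneg _) (mul_nonneg hq.1 (sub_nonneg.2 hq.2))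
  linear_combination this

section QuadraticRoots

variable {T Δ c μ : ℝ}

theorem sub_sub_mul_sub_add_of_sq_eq (hΔ : Δ ^ 2 = T ^ 2 - 4 * c) :
    (T - 2 * μ - Δ) * (T - 2 * μ + Δ) = 4 * (μ ^ 2 - μ * T + c) := by
  linear_combination -hΔ

theorem quadratic_pos_of_larger_root_lt (hΔ0 : 0 ≤ Δ) (hΔ : Δ ^ 2 = T ^ 2 - 4 * c)
    (hμ : (T + Δ) / 2 < μ) : 0 < μ ^ 2 - μ * T + c := by
  have hprod : 0 < (μ - (T + Δ) / 2) * (μ - (T - Δ) / 2) := by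
    apply mul_pos <;> linarith
  linear_combination hprod - hΔ / 4

end QuadraticRoots

theorem hasDerivAt_quadratic (a b c x : ℝ) :
    HasDerivAt (fun y => a + b * y + c * y ^ 2) (b + 2 * c * x) x := by
  refine (((hasDerivAt_id x).const_mul b).const_add a |>.add
    ((hasDerivAt_pow 2 x).const_mul c)).congr_deriv ?_
  simp only [mul_one, Nat.cast_ofNat, add_right_inj]
  ring

section Model

variable {k q μ x xv qa qv T Δ : ℝ}

/-- `2((1 - xᵛ)(1 - qᵛ) + μ - qᵃ)` multiplied by the denominator `(x-1)kq + k + 1` of `xᵛ`. -/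
def vaxNumer (k q μ x : ℝ) : ℝ :=
  2 * (((x - 1) * k * q + 1) * ((1 - x) * q) + (μ - (x + (1 - x) * q)) * ((x - 1) * k * q + k + 1))

/-- `μ² - μT + x(1 - xᵛ)` multiplied by the denominator `(x-1)kq + k + 1` of `xᵛ`. -/
def vaxDenom (k q μ x : ℝ) : ℝ :=
  μ ^ 2 * ((x - 1) * k * q + k + 1) - μ * ((x - 1) * x * k * q + x * k + x + 1)
    + (x - 1) * x * k * q + x

theorem hasDerivAt_vaxNumer :
    HasDerivAt (vaxNumer k q μ) (-2 - 2 * k + 4 * k * q + 2 * k * q * μ + 2 * (-2 * k * q) * x) x := by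
  have : vaxNumer k q μ = fun y => (2 * μ + 2 * k * μ - 2 * k * q - 2 * k * q * μ)
      + (-2 - 2 * k + 4 * k * q + 2 * k * q * μ) * y + (-2 * k * q) * y ^ 2 := by
    funext y; unfold vaxNumer; ring
  rw [this]
  exact hasDerivAt_quadratic _ _ _ _

theorem hasDerivAt_vaxDenom :
    HasDerivAt (vaxDenom k q μ)
      (1 - μ - k * μ - k * q + k * q * μ + k * q * μ ^ 2 + 2 * (k * q - k * q * μ) * x) x := by
  have : vaxDenom k q μ = fun y => (μ ^ 2 + k * μ ^ 2 - k * q * μ ^ 2 - μ)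
      + (1 - μ - k * μ - k * q + k * q * μ + k * q * μ ^ 2) * y + (k * q - k * q * μ) * y ^ 2 := by
    funext y; unfold vaxDenom; ring
  rw [this]
  exact hasDerivAt_quadratic _ _ _ _

theorem hasDerivAt_vaxNumer_div_vaxDenom (hE : vaxDenom k q μ x ≠ 0) :
    HasDerivAt (fun y => vaxNumer k q μ y / (4 * vaxDenom k q μ y))
      (-(k * q * (k * (x ^ 2 * (q - 1) + 2 * x * (μ - q) - μ ^ 2 + q) + μ - 1))
        / (2 * vaxDenom k q μ x ^ 2)) x := by
  refine (hasDerivAt_vaxNumer.div (hasDerivAt_vaxDenom.const_mul 4)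
    (mul_ne_zero four_ne_zero hE)).congr_deriv ?_
  field_simp
  unfold vaxNumer vaxDenom
  ring

theorem vaxNumer_eq_mul (hP : (x - 1) * k * q + k + 1 ≠ 0)
    (hxv : xv = k / ((x - 1) * k * q + k + 1)) (hqa : qa = x + (1 - x) * q)
    (hqv : qv = x + (1 - x) * (1 - q)) :
    vaxNumer k q μ x = ((x - 1) * k * q + k + 1) * (2 * ((1 - xv) * (1 - qv) + (μ - qa))) := by
  subst hxv hqa hqv
  unfold vaxNumer
  linear_combination (2 * (1 - (x + (1 - x) * (1 - q)))) * div_mul_cancel₀ k hP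

theorem vaxDenom_eq_mul (hP : (x - 1) * k * q + k + 1 ≠ 0)
    (hxv : xv = k / ((x - 1) * k * q + k + 1)) (hqa : qa = x + (1 - x) * q)
    (hqv : qv = x + (1 - x) * (1 - q)) (hT : T = qa * 1 + qv * (1 - xv)) :
    vaxDenom k q μ x = ((x - 1) * k * q + k + 1) * (μ ^ 2 - μ * T + x * (1 - xv)) := by
  subst hxv hqa hqv hT
  unfold vaxDenom
  linear_combination (x - μ * (x + (1 - x) * (1 - q))) * div_mul_cancel₀ k hP

theorem discr_nonneg (hq : q ∈ Icc (0 : ℝ) 1) (hs : 0 ≤ 1 - xv) (hqa : qa = x + (1 - x) * q)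
    (hqv : qv = x + (1 - x) * (1 - q)) (hT : T = qa * 1 + qv * (1 - xv)) :
    0 ≤ T ^ 2 - 4 * x * 1 * (1 - xv) := by
  subst hqa hqv hT
  have := four_mul_mul_le_sq_add_mul hs (le_mixture_mul_mixture hq x)
  linarith

theorem sq_eq_discr (hk : 0 < k) (hq : q ∈ Icc (0 : ℝ) 1) (hx : 0 < (x - 1) * k * q + 1)
    (hxv : xv = k / ((x - 1) * k * q + k + 1)) (hqa : qa = x + (1 - x) * q)
    (hqv : qv = x + (1 - x) * (1 - q)) (hT : T = qa * 1 + qv * (1 - xv))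
    (hΔ : Δ = √(T ^ 2 - 4 * x * 1 * (1 - xv))) :
    Δ ^ 2 = T ^ 2 - 4 * (x * (1 - xv)) := by
  have hs : 0 ≤ 1 - xv := by
    rw [hxv, sub_nonneg, div_le_one (by linarith)]
    linarith
  rw [hΔ, Real.sq_sqrt (discr_nonneg hq hs hqa hqv hT)]
  ring

theorem cumInf_eq_vaxNumer_div (hk : 0 < k) (hq : q ∈ Icc (0 : ℝ) 1)
    (hx : 0 < (x - 1) * k * q + 1) (hxv : xv = k / ((x - 1) * k * q + k + 1))
    (hqa : qa = x + (1 - x) * q) (hqv : qv = x + (1 - x) * (1 - q))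
    (hT : T = qa * 1 + qv * (1 - xv)) (hΔ : Δ = √(T ^ 2 - 4 * x * 1 * (1 - xv))) :
    2 * ((1 - xv) * (1 - qv) + (μ - qa)) / ((T - 2 * μ - Δ) * (T - 2 * μ + Δ))
      = vaxNumer k q μ x / (4 * vaxDenom k q μ x) := by
  have hP : (x - 1) * k * q + k + 1 ≠ 0 := by linarith
  rw [sub_sub_mul_sub_add_of_sq_eq (sq_eq_discr hk hq hx hxv hqa hqv hT hΔ),
    vaxNumer_eq_mul hP hxv hqa hqv, vaxDenom_eq_mul hP hxv hqa hqv hT, mul_left_comm 4,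
    mul_div_mul_left _ _ hP]

theorem vaxDenom_pos (hk : 0 < k) (hq : q ∈ Icc (0 : ℝ) 1) (hx : 0 < (x - 1) * k * q + 1)
    (hxv : xv = k / ((x - 1) * k * q + k + 1)) (hqa : qa = x + (1 - x) * q)
    (hqv : qv = x + (1 - x) * (1 - q)) (hT : T = qa * 1 + qv * (1 - xv))
    (hΔ : Δ = √(T ^ 2 - 4 * x * 1 * (1 - xv))) (hμ : (T + Δ) / 2 < μ) :
    0 < vaxDenom k q μ x := by
  rw [vaxDenom_eq_mul (by linarith) hxv hqa hqv hT]
  exact mul_pos (by linarith) (quadratic_pos_of_larger_root_lt (hΔ ▸ Real.sqrt_nonneg _)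
    (sq_eq_discr hk hq hx hxv hqa hqv hT hΔ) hμ)

end Model

/-- In the NV-risk model with `xa = 0` and
`xv(h) = k/((h-1)kq+k+1)` (symmetric initial infection, normalized `ρ₀ = 1`),
the total derivative of the vaxxer cumulative infection w.r.t. homophily is
`dCIᵛ/dh = -(kq(k(h²(q-1)+2h(μ-q)-μ²+q)+μ-1)) /
  (2(μ²((h-1)kq+k+1) - μ((h-1)hkq+hk+h+1)+(h-1)hkq+h)²)`,
which is strictly positive whenever
`k > (μ-1)/(μ² - 2hμ + h²(1-q) + 2hq - q)` and the latter denominator is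
positive. -/
theorem stmt_16 (k q μ : ℝ) (hk : 0 < k)
    (hq : q ∈ Set.Ioo (0:ℝ) 1)
    (xv qa qv T Δ μhat CIv : ℝ → ℝ)
    (hxv : ∀ h, xv h = k / ((h-1)*k*q + k + 1))
    (hqa : ∀ h, qa h = h + (1-h)*q) (hqv : ∀ h, qv h = h + (1-h)*(1-q))
    (hT : ∀ h, T h = qa h * 1 + qv h * (1 - xv h))
    (hΔ : ∀ h, Δ h = Real.sqrt ((T h)^2 - 4*h*1*(1 - xv h)))
    (hμhat : ∀ h, μhat h = (T h + Δ h)/2)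
    (hCIv : ∀ h, CIv h =
      2*((1 - xv h)*(1 - qv h) + (μ - qa h))
        / ((T h - 2*μ - Δ h) * (T h - 2*μ + Δ h))) :
    ∀ h ∈ Set.Ico (0:ℝ) 1, k*q*(1-h) < 1 → μhat h < μ →
      deriv CIv h
        = -(k*q*(k*(h^2*(q-1) + 2*h*(μ-q) - μ^2 + q) + μ - 1))
          / (2*(μ^2*((h-1)*k*q + k + 1) - μ*((h-1)*h*k*q + h*k + h + 1)
              + (h-1)*h*k*q + h)^2)
      ∧ (0 < μ^2 - 2*h*μ + h^2*(1-q) + 2*h*q - q →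
          k > (μ-1)/(μ^2 - 2*h*μ + h^2*(1-q) + 2*h*q - q) →
          0 < deriv CIv h) := by
  intro h _ hkq hμ
  have hq' := Ioo_subset_Icc_self hq
  have hP : 0 < (h - 1) * k * q + 1 := by linarith
  have hCI : CIv =ᶠ[𝓝 h] fun x => vaxNumer k q μ x / (4 * vaxDenom k q μ x) := by
    have hopen : IsOpen {x : ℝ | 0 < (x - 1) * k * q + 1} :=
      isOpen_lt continuous_const (by fun_prop)
    filter_upwards [hopen.mem_nhds hP] with x hx
    exact (hCIv x).trans
      (cumInf_eq_vaxNumer_div hk hq' hx (hxv x) (hqa x) (hqv x) (hT x) (hΔ x))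
  have hE : 0 < vaxDenom k q μ h :=
    vaxDenom_pos hk hq' hP (hxv h) (hqa h) (hqv h) (hT h) (hΔ h) (hμhat h ▸ hμ)
  have hderiv := hCI.deriv_eq.trans (hasDerivAt_vaxNumer_div_vaxDenom hE.ne').deriv
  refine ⟨hderiv, fun hD hkD => ?_⟩
  rw [hderiv]
  have hkD' : 0 < k * (μ^2 - 2*h*μ + h^2*(1-q) + 2*h*q - q) - (μ - 1) := by
    rw [gt_iff_lt, div_lt_iff₀ hD] at hkD
    linarith
  have hnum := mul_pos (mul_pos hk hq.1) hkD'
  exact div_pos (by linear_combination hnum) (by positivity)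
end

section
/- Let $\alpha < 0$ and let $\Delta U^a, \Delta U^v : (0,1) \to \mathbb{R}$ be continuous, bounded above, and bounded below by a positive constant. Then the function $\Phi(q) = q^\alpha \Delta U^a(q) - (1-q)^\alpha \Delta U^v(q)$ satisfies $\lim_{q\to 0^+}\Phi(q) = +\infty$ and $\lim_{q\to 1^-}\Phi(q) = -\infty$, and hence $\Phi$ has a zero $q^* \in (0,1)$. -/
/-!
Near `q = 0` the term `q ^ α * ΔUa q` is at least `m * q ^ α`, which blows up because `α < 0`,
while `(1 - q) ^ α * ΔUv q` stays below `(1 / 2) ^ α * M`; hence `Φ → +∞`. The reflection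
`q ↦ 1 - q` exchanges the two terms up to sign, so `Φ → -∞` at `1`, and the intermediate value
theorem on the connected set `(0, 1)` produces a zero.
-/

open Filter Set Topology

lemma Filter.Tendsto.atTop_mul_of_eventually_ge {ι : Type*} {l : Filter ι} {f g : ι → ℝ} {c : ℝ}
    (hc : 0 < c) (hf : Tendsto f l atTop) (hg : ∀ᶠ x in l, c ≤ g x) :
    Tendsto (fun x => f x * g x) l atTop := by
  refine tendsto_atTop_mono' _ ?_ (hf.atTop_mul_const hc)
  filter_upwards [hg, hf.eventually_ge_atTop 0] with x hgx hfx
  exact mul_le_mul_of_nonneg_left hgx hfx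

lemma one_sub_mem_Ioo_zero_one {q : ℝ} (hq : q ∈ Ioo (0 : ℝ) 1) : 1 - q ∈ Ioo (0 : ℝ) 1 :=
  ⟨sub_pos.2 hq.2, sub_lt_self 1 hq.1⟩

lemma tendsto_one_sub_nhdsWithin_Ioo_one :
    Tendsto (fun q : ℝ => 1 - q) (𝓝[Ioo 0 1] 1) (𝓝[Ioo 0 1] 0) := by
  refine tendsto_nhdsWithin_iff.2 ⟨?_, eventually_nhdsWithin_of_forall
    fun q hq => one_sub_mem_Ioo_zero_one hq⟩
  exact ((continuous_sub_left (1 : ℝ)).tendsto' 1 0 (sub_self 1)).mono_left nhdsWithin_le_nhds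

lemma tendsto_rpow_mul_sub_rpow_mul_nhdsWithin_Ioo_zero {α m M : ℝ} (hα : α < 0) (hm : 0 < m)
    {a v : ℝ → ℝ} (ha : ∀ q ∈ Ioo (0 : ℝ) 1, m ≤ a q)
    (hv : ∀ q ∈ Ioo (0 : ℝ) 1, 0 ≤ v q ∧ v q ≤ M) :
    Tendsto (fun q => q ^ α * a q - (1 - q) ^ α * v q) (𝓝[Ioo 0 1] 0) atTop := by
  have hpow : Tendsto (fun q : ℝ => q ^ α * a q) (𝓝[Ioo 0 1] 0) atTop :=
    ((tendsto_rpow_neg_nhdsGT_zero hα).mono_left (nhdsWithin_mono _ Ioo_subset_Ioi_self))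
      |>.atTop_mul_of_eventually_ge hm (eventually_nhdsWithin_of_forall ha)
  have hbdd : ∀ᶠ q in 𝓝[Ioo 0 1] 0, -((1 / 2 : ℝ) ^ α * M) ≤ -((1 - q) ^ α * v q) := by
    filter_upwards [self_mem_nhdsWithin,
      nhdsWithin_le_nhds (gt_mem_nhds (by norm_num : (0 : ℝ) < 1 / 2))] with q hq hq_half
    obtain ⟨hv0, hvM⟩ := hv q hq
    have hbase : (1 - q) ^ α ≤ (1 / 2 : ℝ) ^ α :=
      Real.rpow_le_rpow_of_nonpos (by norm_num) (by linarith) hα.le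
    exact neg_le_neg (mul_le_mul hbase hvM hv0 (by positivity))
  simpa only [sub_eq_add_neg] using tendsto_atTop_add_right_of_le' _ _ hpow hbdd

/-- Let `α < 0` and let `ΔUa, ΔUv : (0,1) → ℝ` be continuous,
bounded above, and bounded below by a positive constant.  Then
`Φ(q) = q^α ΔUa(q) - (1-q)^α ΔUv(q)` tends to `+∞` as `q → 0⁺` and to `-∞` as
`q → 1⁻`, and hence `Φ` has a zero `q* ∈ (0,1)`. -/
theorem stmt_17 (α : ℝ) (hα : α < 0)
    (ΔUa ΔUv : ℝ → ℝ)
    (hconta : ContinuousOn ΔUa (Set.Ioo 0 1))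
    (hcontv : ContinuousOn ΔUv (Set.Ioo 0 1))
    (M : ℝ) (hub : ∀ q ∈ Set.Ioo (0:ℝ) 1, ΔUa q ≤ M ∧ ΔUv q ≤ M)
    (m : ℝ) (hm : 0 < m)
    (hlb : ∀ q ∈ Set.Ioo (0:ℝ) 1, m ≤ ΔUa q ∧ m ≤ ΔUv q)
    (Φ : ℝ → ℝ)
    (hΦ : ∀ q, Φ q = q ^ α * ΔUa q - (1-q) ^ α * ΔUv q) :
    Filter.Tendsto Φ (nhdsWithin 0 (Set.Ioo 0 1)) Filter.atTop
    ∧ Filter.Tendsto Φ (nhdsWithin 1 (Set.Ioo 0 1)) Filter.atBot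
    ∧ ∃ qstar ∈ Set.Ioo (0:ℝ) 1, Φ qstar = 0 := by
  obtain rfl : Φ = fun q => q ^ α * ΔUa q - (1 - q) ^ α * ΔUv q := funext hΦ
  have hbounds (q) (hq : q ∈ Ioo (0 : ℝ) 1) : 0 ≤ ΔUa q ∧ 0 ≤ ΔUv q :=
    ⟨hm.le.trans (hlb q hq).1, hm.le.trans (hlb q hq).2⟩
  have hzero := tendsto_rpow_mul_sub_rpow_mul_nhdsWithin_Ioo_zero hα hm
    (fun q hq => (hlb q hq).1) fun q hq => ⟨(hbounds q hq).2, (hub q hq).2⟩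
  have hone : Tendsto (fun q => q ^ α * ΔUa q - (1 - q) ^ α * ΔUv q) (𝓝[Ioo 0 1] 1) atBot := by
    have hreflected := tendsto_rpow_mul_sub_rpow_mul_nhdsWithin_Ioo_zero hα hm
      (a := fun p => ΔUv (1 - p)) (v := fun p => ΔUa (1 - p))
      (fun p hp => (hlb _ (one_sub_mem_Ioo_zero_one hp)).2)
      fun p hp => ⟨(hbounds _ (one_sub_mem_Ioo_zero_one hp)).1,
        (hub _ (one_sub_mem_Ioo_zero_one hp)).1⟩
    refine (tendsto_neg_atTop_atBot.comp (hreflected.comp tendsto_one_sub_nhdsWithin_Ioo_one))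
      |>.congr fun q => ?_
    simp only [Function.comp_apply, sub_sub_cancel]
    ring
  have hcont : ContinuousOn (fun q => q ^ α * ΔUa q - (1 - q) ^ α * ΔUv q) (Ioo 0 1) :=
    ((continuousOn_id.rpow_const fun q hq => .inl hq.1.ne').mul hconta).sub
      (((continuousOn_const.sub continuousOn_id).rpow_const
        fun q hq => .inl (one_sub_mem_Ioo_zero_one hq).1.ne').mul hcontv)
  have := left_nhdsWithin_Ioo_neBot (zero_lt_one' ℝ)
  have := right_nhdsWithin_Ioo_neBot (zero_lt_one' ℝ)
  obtain ⟨q, hq, hq0⟩ := isPreconnected_Ioo.intermediate_value_Iii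
    (le_principal_iff.2 self_mem_nhdsWithin) (le_principal_iff.2 self_mem_nhdsWithin)
    hcont hone hzero (mem_univ 0)
  exact ⟨hzero, hone, q, hq, hq0⟩
end
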